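/- In a unital coFrobenius bialgebra (A, μ, λ, η) with copairing c = (-1)^{|λ||μ|+|μ|}λη, the following identities hold: (1⊗μ⊗1)(c⊗c) = (λ⊗1)c = (-1)^{|λ|}(1⊗λ)c, and (1⊗μ)(λ⊗1) = (μ⊗1)(1⊗λ) = (μ⊗μ)(1⊗c⊗1) = (-1)^{|λ||μ|} λμ. -/

import Mathlib

open TensorProduct LinearMap
open scoped TensorProduct DirectSum

namespace GradedCoFrob

variable {R : Type} [CommRing R] {M : Type} [AddCommGroup M] [Module R M]

/-- The Koszul sign `(-1)^n` for `n : ℤ`. -/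
def ksign (n : ℤ) : ℤ := (((-1 : ℤˣ) ^ n : ℤˣ) : ℤ)

variable (𝒜 : ℤ → Submodule R M) [DirectSum.Decomposition 𝒜]

/-- Build a linear map `M →ₗ N` out of its values on the homogeneous pieces,
bundled linearly in the family of values. -/
noncomputable def fromPiecesHom {N : Type} [AddCommGroup N] [Module R N] :
    (∀ i : ℤ, 𝒜 i →ₗ[R] N) →ₗ[R] (M →ₗ[R] N) :=
  (LinearMap.lcomp R N (DirectSum.decomposeLinearEquiv 𝒜).toLinearMap).comp
    (DFinsupp.lsum R (M := fun i => 𝒜 i) (N := N)).toLinearMap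

/-- Build a linear map `M →ₗ N` out of its values on the homogeneous pieces. -/
noncomputable def fromPieces {N : Type} [AddCommGroup N] [Module R N]
    (f : ∀ i : ℤ, 𝒜 i →ₗ[R] N) : M →ₗ[R] N :=
  fromPiecesHom 𝒜 f

/-- Build a bilinear map `M →ₗ M →ₗ N` out of its values on pairs of homogeneous pieces. -/
noncomputable def fromPieces₂ {N : Type} [AddCommGroup N] [Module R N]
    (f : ∀ i j : ℤ, 𝒜 i →ₗ[R] 𝒜 j →ₗ[R] N) : M →ₗ[R] M →ₗ[R] N :=
  fromPieces 𝒜 (fun i => (fromPiecesHom 𝒜).comp (LinearMap.pi (fun j => f i j)))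

/-- The operator multiplying the degree `i` component by the Koszul sign `(-1)^(d*i)`. -/
noncomputable def signAction (d : ℤ) : M →ₗ[R] M :=
  fromPieces 𝒜 (fun i => ksign (d * i) • (𝒜 i).subtype)

/-- The Koszul twist `τ(a ⊗ b) = (-1)^{|a||b|} b ⊗ a`. -/
noncomputable def twist : M ⊗[R] M →ₗ[R] M ⊗[R] M :=
  TensorProduct.lift (fromPieces₂ 𝒜 (fun i j =>
    ksign (i * j) • ((((TensorProduct.mk R M M).flip).comp (𝒜 i).subtype).compl₂
      (𝒜 j).subtype)))

/-- Left contraction `(f ⊗ 1)(x ⊗ y) = f(x) • y` (no Koszul sign since `1` has degree `0`). -/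
noncomputable def contrL {N : Type} [AddCommGroup N] [Module R N]
    (f : N →ₗ[R] R) : N ⊗[R] M →ₗ[R] M :=
  TensorProduct.lift ((LinearMap.lsmul R M).comp f)

/-- Right contraction with Koszul sign:
`(1 ⊗ f)(x ⊗ y) = (-1)^{d|x|} f(y) • x` where `d` is the degree of `f`. -/
noncomputable def contrR {N : Type} [AddCommGroup N] [Module R N]
    (f : N →ₗ[R] R) (d : ℤ) : M ⊗[R] N →ₗ[R] M :=
  TensorProduct.lift ((((LinearMap.lsmul R M).comp f).flip).comp (signAction 𝒜 d))

/-- Koszul-signed evaluation of a pair of functionals on a tensor: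
`(x ⊗ y) ↦ f((-1)^{d₁|x|} x) * g((-1)^{d₂|y|} y)`. -/
noncomputable def ev2 (f g : M →ₗ[R] R) (d₁ d₂ : ℤ) : M ⊗[R] M →ₗ[R] R :=
  TensorProduct.lift (((LinearMap.mul R R).comp (f.comp (signAction 𝒜 d₁))).compl₂
    (g.comp (signAction 𝒜 d₂)))

/-- The map `c⃗ : A^∨ → A`, `f ↦ (-1)^{|f||c|}(f ⊗ 1)c`, implemented by putting the sign
`(-1)^{dc |x|}` on the first tensor factor of the copairing `c` (of degree `dc`). -/
noncomputable def cvec (c : M ⊗[R] M) (dc : ℤ) : (M →ₗ[R] R) →ₗ[R] M :=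
  (LinearMap.applyₗ ((LinearMap.rTensor M (signAction 𝒜 dc)) c)).comp
    ((TensorProduct.lift.equiv (RingHom.id R) M M M).toLinearMap.comp
      (LinearMap.llcomp R M R (M →ₗ[R] M) (LinearMap.lsmul R M)))

/-- The operation `(1 ⊗ c ⊗ 1) : A ⊗ A → (A ⊗ A) ⊗ (A ⊗ A)`,
`a ⊗ b ↦ (-1)^{|c||a|} (a ⊗ c₁) ⊗ (c₂ ⊗ b)` for a copairing `c` of degree `dc`. -/
noncomputable def midIns (c : M ⊗[R] M) (dc : ℤ) :
    M ⊗[R] M →ₗ[R] (M ⊗[R] M) ⊗[R] (M ⊗[R] M) :=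
  (TensorProduct.assoc R (M ⊗[R] M) M M).toLinearMap.comp
    (LinearMap.rTensor M
      (((TensorProduct.assoc R M M M).symm.toLinearMap).comp
        (((TensorProduct.mk R M (M ⊗[R] M)).flip c).comp (signAction 𝒜 dc))))

/-- The Koszul-signed cyclic permutation `σ(a⊗b⊗c) = (-1)^{(|a|+|b|)|c|} c⊗a⊗b`. -/
noncomputable def cyc : (M ⊗[R] M) ⊗[R] M →ₗ[R] (M ⊗[R] M) ⊗[R] M :=
  (LinearMap.rTensor M (twist 𝒜)).comp
    ((TensorProduct.assoc R M M M).symm.toLinearMap.comp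
      ((LinearMap.lTensor M (twist 𝒜)).comp (TensorProduct.assoc R M M M).toLinearMap))

/-- The submodule `A_i ⊗ A_j ⊆ A ⊗ A`. -/
noncomputable def tpiece (i j : ℤ) : Submodule R (M ⊗[R] M) :=
  LinearMap.range (TensorProduct.map (𝒜 i).subtype (𝒜 j).subtype)

/-- The degree `k` part `⨁_{i+j=k} A_i ⊗ A_j` of `A ⊗ A`. -/
noncomputable def tgrade (k : ℤ) : Submodule R (M ⊗[R] M) :=
  ⨆ i : ℤ, tpiece 𝒜 i (k - i)

/-- A product is homogeneous of degree `d`. -/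
def IsHomogProd (d : ℤ) (mu : M ⊗[R] M →ₗ[R] M) : Prop :=
  ∀ i j : ℤ, ∀ x ∈ 𝒜 i, ∀ y ∈ 𝒜 j, mu (x ⊗ₜ[R] y) ∈ 𝒜 (i + j + d)

/-- A coproduct is homogeneous of degree `d`. -/
def IsHomogCoprod (d : ℤ) (lam : M →ₗ[R] M ⊗[R] M) : Prop :=
  ∀ k : ℤ, ∀ x ∈ 𝒜 k, lam x ∈ tgrade 𝒜 (k + d)

/-- A scalar-valued functional is homogeneous of degree `d`. -/
def IsHomogFun (d : ℤ) (f : M →ₗ[R] R) : Prop :=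
  ∀ i : ℤ, i ≠ -d → ∀ x ∈ 𝒜 i, f x = 0

/-- A pairing is homogeneous of degree `d`. -/
def IsHomogPairing (d : ℤ) (p : M ⊗[R] M →ₗ[R] R) : Prop :=
  ∀ i j : ℤ, i + j ≠ -d → ∀ x ∈ 𝒜 i, ∀ y ∈ 𝒜 j, p (x ⊗ₜ[R] y) = 0

end GradedCoFrob
namespace GradedCoFrob

/-- A unital coFrobenius bialgebra structure on a ℤ-graded module
(Definition `defi:coFrobenius-unital-bialgebra`), with all Koszul sign conventions explicit. -/
structure UnitalCoFrob (R : Type) [CommRing R] {M : Type} [AddCommGroup M] [Module R M]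
    (𝒜 : ℤ → Submodule R M) [DirectSum.Decomposition 𝒜] where
  mu : M ⊗[R] M →ₗ[R] M
  lam : M →ₗ[R] M ⊗[R] M
  unit : M
  dm : ℤ
  dl : ℤ
  mu_homog : IsHomogProd 𝒜 dm mu
  lam_homog : IsHomogCoprod 𝒜 dl lam
  unit_homog : unit ∈ 𝒜 (-dm)
  /-- graded associativity `μ(μ⊗1) = (-1)^{|μ|} μ(1⊗μ)` -/
  mu_assoc : mu.comp (LinearMap.rTensor M mu) =
    ksign dm • (mu.comp ((TensorProduct.map (signAction 𝒜 dm) mu).comp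
      (TensorProduct.assoc R M M M).toLinearMap))
  /-- `(-1)^{|μ|} μ(η ⊗ 1) = 1` -/
  unit_left : ksign dm • (mu.comp ((TensorProduct.mk R M M) unit)) = LinearMap.id
  /-- `μ(1 ⊗ η) = 1` -/
  unit_right : mu.comp (((TensorProduct.mk R M M).flip unit).comp (signAction 𝒜 (-dm))) =
    LinearMap.id
  cop : M ⊗[R] M
  /-- the copairing `c = (-1)^{|λ||μ|+|μ|} λη` -/
  cop_def : cop = ksign (dl * dm + dm) • lam unit
  /-- `λ = (1⊗μ)(c⊗1)` -/
  cofrob_left : lam = (TensorProduct.map (signAction 𝒜 dm) mu).comp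
    ((TensorProduct.assoc R M M M).toLinearMap.comp (TensorProduct.mk R (M ⊗[R] M) M cop))
  /-- `λ = (-1)^{|μ|}(μ⊗1)(1⊗c)` -/
  cofrob_right : lam = ksign dm • ((LinearMap.rTensor M mu).comp
    ((TensorProduct.assoc R M M M).symm.toLinearMap.comp
      (((TensorProduct.mk R M (M ⊗[R] M)).flip cop).comp (signAction 𝒜 (dl - dm)))))
  /-- `τc = (-1)^{|λ|} c` -/
  cop_symm : twist 𝒜 cop = ksign dl • cop

/-- A biunital coFrobenius bialgebra structure on a ℤ-graded module
(Definition `defi:biunital-coFrobenius-bialgebra`), with all Koszul sign conventions explicit. -/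
structure BiunitalCoFrob (R : Type) [CommRing R] {M : Type} [AddCommGroup M] [Module R M]
    (𝒜 : ℤ → Submodule R M) [DirectSum.Decomposition 𝒜] where
  mu : M ⊗[R] M →ₗ[R] M
  lam : M →ₗ[R] M ⊗[R] M
  unit : M
  counit : M →ₗ[R] R
  dm : ℤ
  dl : ℤ
  mu_homog : IsHomogProd 𝒜 dm mu
  lam_homog : IsHomogCoprod 𝒜 dl lam
  unit_homog : unit ∈ 𝒜 (-dm)
  counit_homog : IsHomogFun 𝒜 (-dl) counit
  mu_assoc : mu.comp (LinearMap.rTensor M mu) =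
    ksign dm • (mu.comp ((TensorProduct.map (signAction 𝒜 dm) mu).comp
      (TensorProduct.assoc R M M M).toLinearMap))
  /-- graded coassociativity `(λ⊗1)λ = (-1)^{|λ|}(1⊗λ)λ` -/
  lam_coassoc : (LinearMap.rTensor M lam).comp lam =
    ksign dl • ((TensorProduct.assoc R M M M).symm.toLinearMap.comp
      ((TensorProduct.map (signAction 𝒜 dl) lam).comp lam))
  unit_left : ksign dm • (mu.comp ((TensorProduct.mk R M M) unit)) = LinearMap.id
  unit_right : mu.comp (((TensorProduct.mk R M M).flip unit).comp (signAction 𝒜 (-dm))) =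
    LinearMap.id
  /-- `(ε⊗1)λ = 1` -/
  counit_left : (contrL counit).comp lam = LinearMap.id
  /-- `(-1)^{|λ|}(1⊗ε)λ = 1` -/
  counit_right : ksign dl • ((contrR 𝒜 counit (-dl)).comp lam) = LinearMap.id
  cop : M ⊗[R] M
  cop_def : cop = ksign (dl * dm + dm) • lam unit
  pr : M ⊗[R] M →ₗ[R] R
  /-- the pairing `p = (-1)^{|λ|} εμ` -/
  pr_def : pr = ksign dl • (counit.comp mu)
  cofrob_left : lam = (TensorProduct.map (signAction 𝒜 dm) mu).comp
    ((TensorProduct.assoc R M M M).toLinearMap.comp (TensorProduct.mk R (M ⊗[R] M) M cop))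
  cofrob_right : lam = ksign dm • ((LinearMap.rTensor M mu).comp
    ((TensorProduct.assoc R M M M).symm.toLinearMap.comp
      (((TensorProduct.mk R M (M ⊗[R] M)).flip cop).comp (signAction 𝒜 (dl - dm)))))
  /-- `μ = (-1)^{|μ||λ|+|λ|}(p⊗1)(1⊗λ)` -/
  cofrob_pr_left : mu = ksign (dm * dl + dl) • ((contrL pr).comp
    ((TensorProduct.assoc R M M M).symm.toLinearMap.comp
      (TensorProduct.map (signAction 𝒜 dl) lam)))
  /-- `μ = (-1)^{|μ||λ|}(1⊗p)(λ⊗1)` -/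
  cofrob_pr_right : mu = ksign (dm * dl) • ((contrR 𝒜 pr (dm - dl)).comp
    ((TensorProduct.assoc R M M M).toLinearMap.comp (LinearMap.rTensor M lam)))
  cop_symm : twist 𝒜 cop = ksign dl • cop
  /-- `pτ = (-1)^{|μ|} p` -/
  pr_symm : pr.comp (twist 𝒜) = ksign dm • pr

end GradedCoFrob


/-!
Every identity is checked by expanding `λ` through one of the two coFrobenius relations.
Writing `c = Σ c₁ ⊗ c₂`, all four maps of the second chain send `x ⊗ y` to the sandwich
`Σ ± μ(x ⊗ c₁) ⊗ μ(c₂ ⊗ y)` (for `λμ` after graded associativity), while `(λ ⊗ 1)c` and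
`(1 ⊗ λ)c` both expand to the double sum `(1 ⊗ μ ⊗ 1)(c ⊗ c)`. The leftover Koszul signs
cancel because `c` is homogeneous of degree `|λ| - |μ|` and `n² ≡ n (mod 2)`.
-/

namespace GradedCoFrob

lemma ksign_eq_negOnePow (n : ℤ) : ksign n = n.negOnePow := rfl

lemma ksign_add (m n : ℤ) : ksign (m + n) = ksign m * ksign n := by
  simp [ksign_eq_negOnePow, Int.negOnePow_add]

lemma ksign_mul_self (n : ℤ) : ksign (n * n) = ksign n := by
  simp [ksign_eq_negOnePow]

lemma ksign_smul_ksign_smul {N : Type*} [AddCommGroup N] (m n : ℤ) (x : N) :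
    ksign m • ksign n • x = ksign (m + n) • x := by
  rw [smul_smul, ksign_add]

lemma ksign_eq_of_even_sub {m n : ℤ} (h : Even (m - n)) : ksign m = ksign n := by
  rw [ksign_eq_negOnePow, ksign_eq_negOnePow, (Int.negOnePow_eq_iff m n).2 h]

lemma ksign_of_even {n : ℤ} (h : Even n) : ksign n = 1 := by
  rw [ksign_eq_negOnePow, Int.negOnePow_even n h, Units.val_one]

section TensorAssoc

variable {R : Type*} [CommSemiring R] {A B C D A' E : Type*}
  [AddCommMonoid A] [AddCommMonoid B] [AddCommMonoid C] [AddCommMonoid D] [AddCommMonoid A']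
  [AddCommMonoid E] [Module R A] [Module R B] [Module R C] [Module R D] [Module R A']
  [Module R E]

lemma assoc_tmul_eq_lTensor (w : A ⊗[R] B) (c : C) :
    TensorProduct.assoc R A B C (w ⊗ₜ c) = lTensor A ((TensorProduct.mk R B C).flip c) w := by
  induction w using TensorProduct.induction_on with
  | zero => simp
  | tmul a b => simp
  | add u v hu hv => simp [add_tmul, hu, hv]

lemma assoc_symm_tmul_eq_rTensor (a : A) (w : B ⊗[R] C) :
    (TensorProduct.assoc R A B C).symm (a ⊗ₜ w) = rTensor C (TensorProduct.mk R A B a) w := by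
  induction w using TensorProduct.induction_on with
  | zero => simp
  | tmul b c => simp
  | add u v hu hv => simp [tmul_add, hu, hv]

lemma map_assoc_tmul (f : A →ₗ[R] A') (g : B ⊗[R] C →ₗ[R] E) (w : A ⊗[R] B) (c : C) :
    map f g (TensorProduct.assoc R A B C (w ⊗ₜ c)) = map f ((curry g).flip c) w := by
  rw [assoc_tmul_eq_lTensor, ← comp_apply, map_comp_lTensor]
  rfl

lemma map_assoc_symm_tmul (f : A ⊗[R] B →ₗ[R] E) (g : C →ₗ[R] D) (a : A) (w : B ⊗[R] C) :
    map f g ((TensorProduct.assoc R A B C).symm (a ⊗ₜ w)) = map (curry f a) g w := by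
  rw [assoc_symm_tmul_eq_rTensor, ← comp_apply, map_comp_rTensor]
  rfl

lemma rTensor_map_assoc_mk (f : A →ₗ[R] A') (g : B ⊗[R] C →ₗ[R] E) (z : A ⊗[R] B)
    (w : C ⊗[R] D) :
    rTensor D ((map f g) ∘ₗ (TensorProduct.assoc R A B C).toLinearMap ∘ₗ
        TensorProduct.mk R (A ⊗[R] B) C z) w =
      (TensorProduct.assoc R A' E D).symm
        (map f (rTensor D g ∘ₗ (TensorProduct.assoc R B C D).symm.toLinearMap ∘ₗ
          (TensorProduct.mk R B (C ⊗[R] D)).flip w) z) := by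
  induction z using TensorProduct.induction_on with
  | zero => simp
  | add u v hu hv => simp only [map_add, comp_add, rTensor_add, LinearMap.add_apply, hu, hv]
  | tmul a b =>
    induction w using TensorProduct.induction_on with
    | zero => simp
    | add u v hu hv => simp [tmul_add, hu, hv]
    | tmul c d => simp

end TensorAssoc

section TensorZsmul

variable {R : Type*} [CommRing R] {A B C D : Type*} [AddCommGroup A] [AddCommGroup B]
  [AddCommGroup C] [AddCommGroup D] [Module R A] [Module R B] [Module R C] [Module R D]

lemma map_zsmul_left (k : ℤ) (f : A →ₗ[R] B) (g : C →ₗ[R] D) : map (k • f) g = k • map f g := by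
  ext a c
  simp [smul_tmul']

lemma map_zsmul_right (k : ℤ) (f : A →ₗ[R] B) (g : C →ₗ[R] D) : map f (k • g) = k • map f g := by
  ext a c
  simp

end TensorZsmul

section Grading

variable {R : Type} [CommRing R] {M : Type} [AddCommGroup M] [Module R M]
  (𝒜 : ℤ → Submodule R M) [DirectSum.Decomposition 𝒜]

lemma fromPieces_of_mem {N : Type} [AddCommGroup N] [Module R N]
    (f : ∀ i : ℤ, 𝒜 i →ₗ[R] N) {i : ℤ} {x : M} (hx : x ∈ 𝒜 i) :
    fromPieces 𝒜 f x = f i ⟨x, hx⟩ := by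
  simp only [fromPieces, fromPiecesHom, comp_apply, lcomp_apply, LinearEquiv.coe_coe,
    DirectSum.decomposeLinearEquiv_apply, DirectSum.decompose_of_mem 𝒜 hx]
  exact DFinsupp.lsum_single _ _ _ _

lemma signAction_of_mem {d i : ℤ} {x : M} (hx : x ∈ 𝒜 i) :
    signAction 𝒜 d x = ksign (d * i) • x :=
  fromPieces_of_mem 𝒜 _ hx

lemma signAction_comp_signAction (d e : ℤ) :
    signAction 𝒜 d ∘ₗ signAction 𝒜 e = signAction 𝒜 (d + e) := by
  refine DirectSum.decompose_lhom_ext 𝒜 fun i => LinearMap.ext fun x => ?_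
  simp only [comp_apply, Submodule.coe_subtype, signAction_of_mem 𝒜 x.2, map_zsmul,
    ksign_smul_ksign_smul, add_mul, add_comm]

lemma signAction_signAction (d e : ℤ) (x : M) :
    signAction 𝒜 d (signAction 𝒜 e x) = signAction 𝒜 (d + e) x :=
  congr($(signAction_comp_signAction 𝒜 d e) x)

lemma signAction_mu_tmul {dm : ℤ} {mu : M ⊗[R] M →ₗ[R] M} (hmu : IsHomogProd 𝒜 dm mu)
    (d : ℤ) (a b : M) :
    signAction 𝒜 d (mu (a ⊗ₜ b)) =
      ksign (d * dm) • mu (signAction 𝒜 d a ⊗ₜ signAction 𝒜 d b) := by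
  induction a using DirectSum.Decomposition.inductionOn 𝒜 with
  | zero => simp
  | add a a' ha ha' => simp only [add_tmul, map_add, ha, ha', smul_add]
  | @homogeneous i a =>
    induction b using DirectSum.Decomposition.inductionOn 𝒜 with
    | zero => simp
    | add b b' hb hb' => simp only [tmul_add, map_add, hb, hb', smul_add]
    | @homogeneous j b =>
      simp only [signAction_of_mem 𝒜 a.2, signAction_of_mem 𝒜 b.2,
        signAction_of_mem 𝒜 (hmu i j a a.2 b b.2), tmul_smul, ← smul_tmul', map_zsmul,
        ksign_smul_ksign_smul]
      congr 2
      ring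

lemma signAction_comp_curry {dm : ℤ} {mu : M ⊗[R] M →ₗ[R] M} (hmu : IsHomogProd 𝒜 dm mu)
    (d : ℤ) (a : M) :
    signAction 𝒜 d ∘ₗ curry mu a =
      ksign (d * dm) • (curry mu (signAction 𝒜 d a) ∘ₗ signAction 𝒜 d) :=
  LinearMap.ext fun b => signAction_mu_tmul 𝒜 hmu d a b

lemma map_signAction_of_mem_tgrade {t : ℤ} (a b : ℤ) {z : M ⊗[R] M} (hz : z ∈ tgrade 𝒜 t) :
    map (signAction 𝒜 a) (signAction 𝒜 b) z =
      ksign (b * t) • rTensor M (signAction 𝒜 (a - b)) z := by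
  induction hz using Submodule.iSup_induction' with
  | mem i z hz =>
    obtain ⟨w, rfl⟩ := hz
    induction w using TensorProduct.induction_on with
    | zero => simp
    | tmul p q =>
      simp only [map_tmul, rTensor_tmul, Submodule.coe_subtype, signAction_of_mem 𝒜 p.2,
        signAction_of_mem 𝒜 q.2, tmul_smul, smul_tmul', ksign_smul_ksign_smul]
      congr 3
      ring
    | add u v hu hv => simp only [map_add, smul_add, hu, hv]
  | zero => simp
  | add u v _ _ hu hv => simp only [map_add, smul_add, hu, hv]

end Grading

namespace UnitalCoFrob

variable {R : Type} [CommRing R] {M : Type} [AddCommGroup M] [Module R M]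
  {𝒜 : ℤ → Submodule R M} [DirectSum.Decomposition 𝒜] (U : UnitalCoFrob R 𝒜)

lemma cop_mem_tgrade : U.cop ∈ tgrade 𝒜 (U.dl - U.dm) := by
  rw [U.cop_def, show U.dl - U.dm = -U.dm + U.dl by ring]
  exact Submodule.smul_of_tower_mem _ _ (U.lam_homog _ _ U.unit_homog)

lemma lam_eq_map_flip_curry (x : M) :
    U.lam x = map (signAction 𝒜 U.dm) ((curry U.mu).flip x) U.cop := by
  rw [U.cofrob_left]
  exact map_assoc_tmul _ _ _ _

lemma lam_eq_rTensor_curry (x : M) :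
    U.lam x = ksign U.dm • rTensor M (curry U.mu (signAction 𝒜 (U.dl - U.dm) x)) U.cop := by
  rw [U.cofrob_right]
  exact congr_arg _ (map_assoc_symm_tmul _ _ _ _)

lemma flip_curry_comp_flip_curry (x y : M) :
    (curry U.mu).flip y ∘ₗ (curry U.mu).flip x =
      ksign U.dm • ((curry U.mu).flip (U.mu (x ⊗ₜ y)) ∘ₗ signAction 𝒜 U.dm) := by
  ext m
  simpa using congr($(U.mu_assoc) ((m ⊗ₜ x) ⊗ₜ y))

/-- `(μ ⊗ μ)(x ⊗ c ⊗ y)`, with its Koszul signs. -/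
noncomputable def sandwich (x y : M) : M ⊗[R] M :=
  map (curry U.mu (signAction 𝒜 U.dl x) ∘ₗ signAction 𝒜 U.dm) ((curry U.mu).flip y) U.cop

lemma map_assoc_lam_tmul (x y : M) :
    map (signAction 𝒜 U.dm) U.mu (TensorProduct.assoc R M M M (U.lam x ⊗ₜ y)) =
      U.sandwich x y := by
  rw [map_assoc_tmul, lam_eq_rTensor_curry, map_zsmul, ← comp_apply, map_comp_rTensor,
    signAction_comp_curry 𝒜 U.mu_homog, map_zsmul_left, signAction_signAction,
    add_sub_cancel, LinearMap.smul_apply, ksign_mul_self, ksign_smul_ksign_smul, ← two_mul,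
    ksign_of_even (even_two_mul _), one_smul]
  rfl

lemma rTensor_assoc_symm_lam_tmul (x y : M) :
    rTensor M U.mu ((TensorProduct.assoc R M M M).symm (signAction 𝒜 U.dl x ⊗ₜ U.lam y)) =
      U.sandwich x y := by
  rw [lam_eq_map_flip_curry, rTensor, map_assoc_symm_tmul, ← comp_apply, ← map_comp, id_comp]
  rfl

lemma map_midIns_tmul (x y : M) :
    map (U.mu ∘ₗ map (signAction 𝒜 U.dm) (signAction 𝒜 U.dm)) U.mu
      (midIns 𝒜 U.cop (U.dl - U.dm) (x ⊗ₜ y)) = U.sandwich x y := by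
  have hcurry (a : M) : curry (U.mu ∘ₗ map (signAction 𝒜 U.dm) (signAction 𝒜 U.dm)) a =
      curry U.mu (signAction 𝒜 U.dm a) ∘ₗ signAction 𝒜 U.dm := by
    ext b
    simp
  simp only [midIns, comp_apply, LinearEquiv.coe_coe, rTensor_tmul, flip_apply, mk_apply]
  rw [map_assoc_tmul, map_assoc_symm_tmul, hcurry, signAction_signAction, add_sub_cancel]
  rfl

lemma lam_mu_tmul (x y : M) :
    ksign (U.dl * U.dm) • U.lam (U.mu (x ⊗ₜ y)) = U.sandwich x y := by
  have hcomp : map (signAction 𝒜 U.dm) ((curry U.mu).flip y)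
      (map (signAction 𝒜 U.dm) ((curry U.mu).flip x) U.cop) =
        ksign U.dm • lTensor M ((curry U.mu).flip (U.mu (x ⊗ₜ y)))
          (map (signAction 𝒜 (U.dm + U.dm)) (signAction 𝒜 U.dm) U.cop) := by
    rw [← comp_apply (map _ _), ← map_comp, flip_curry_comp_flip_curry,
      signAction_comp_signAction, map_zsmul_right, ← lTensor_comp_map]
    rfl
  rw [← map_assoc_lam_tmul, map_assoc_tmul, lam_eq_map_flip_curry U x, hcomp,
    map_signAction_of_mem_tgrade 𝒜 _ _ U.cop_mem_tgrade, add_sub_cancel_right, map_zsmul,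
    ← comp_apply (lTensor M _), lTensor_comp_rTensor, ksign_smul_ksign_smul,
    lam_eq_map_flip_curry]
  congr 1
  refine ksign_eq_of_even_sub ?_
  convert Int.even_mul_pred_self U.dm using 1
  ring

lemma rTensor_lam_cop :
    rTensor M U.lam U.cop = ksign U.dl • (TensorProduct.assoc R M M M).symm.toLinearMap
      (map (signAction 𝒜 U.dl) U.lam U.cop) := by
  set ρ := rTensor M U.mu ∘ₗ (TensorProduct.assoc R M M M).symm.toLinearMap ∘ₗ
    (TensorProduct.mk R M (M ⊗[R] M)).flip U.cop
  have hρ : U.lam = ksign U.dm • (ρ ∘ₗ signAction 𝒜 (U.dl - U.dm)) := U.cofrob_right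
  have hlhs : rTensor M U.lam U.cop =
      (TensorProduct.assoc R M M M).symm (map (signAction 𝒜 U.dm) ρ U.cop) := by
    conv_lhs => rw [U.cofrob_left]
    exact rTensor_map_assoc_mk _ _ _ _
  clear_value ρ
  have hrhs : map (signAction 𝒜 U.dl) (ρ ∘ₗ signAction 𝒜 (U.dl - U.dm)) U.cop =
      ksign (U.dl - U.dm) • map (signAction 𝒜 U.dm) ρ U.cop := by
    rw [← lTensor_comp_map, comp_apply, map_signAction_of_mem_tgrade 𝒜 _ _ U.cop_mem_tgrade,
      sub_sub_cancel, ksign_mul_self, map_zsmul, ← comp_apply (lTensor M ρ),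
      lTensor_comp_rTensor]
  rw [hlhs, hρ, map_zsmul_right, LinearMap.smul_apply, hrhs, map_zsmul, map_zsmul,
    LinearEquiv.coe_coe, ksign_smul_ksign_smul, ksign_smul_ksign_smul,
    ksign_of_even ⟨U.dl, by ring⟩, one_smul]

end UnitalCoFrob

theorem unital_coFrobenius_identities_general {R : Type} [CommRing R] {M : Type} [AddCommGroup M]
    [Module R M]
    (𝒜 : ℤ → Submodule R M) [DirectSum.Decomposition 𝒜]
    (U : UnitalCoFrob R 𝒜) :
    -- (1⊗μ⊗1)(c⊗c) = (λ⊗1)c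
    (((LinearMap.rTensor M (TensorProduct.map (signAction 𝒜 U.dm) U.mu)).comp
        ((LinearMap.rTensor M (TensorProduct.assoc R M M M).toLinearMap).comp
          (TensorProduct.assoc R (M ⊗[R] M) M M).symm.toLinearMap))
        (U.cop ⊗ₜ[R] U.cop)
      = LinearMap.rTensor M U.lam U.cop) ∧
    -- (λ⊗1)c = (-1)^{|λ|}(1⊗λ)c
    (LinearMap.rTensor M U.lam U.cop =
      ksign U.dl • ((TensorProduct.assoc R M M M).symm.toLinearMap
        ((TensorProduct.map (signAction 𝒜 U.dl) U.lam) U.cop))) ∧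
    -- (1⊗μ)(λ⊗1) = (μ⊗1)(1⊗λ)
    ((TensorProduct.map (signAction 𝒜 U.dm) U.mu).comp
        ((TensorProduct.assoc R M M M).toLinearMap.comp (LinearMap.rTensor M U.lam))
      = (LinearMap.rTensor M U.mu).comp
        ((TensorProduct.assoc R M M M).symm.toLinearMap.comp
          (TensorProduct.map (signAction 𝒜 U.dl) U.lam))) ∧
    -- (μ⊗1)(1⊗λ) = (μ⊗μ)(1⊗c⊗1)
    ((LinearMap.rTensor M U.mu).comp
        ((TensorProduct.assoc R M M M).symm.toLinearMap.comp
          (TensorProduct.map (signAction 𝒜 U.dl) U.lam))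
      = (TensorProduct.map
          (U.mu.comp (TensorProduct.map (signAction 𝒜 U.dm) (signAction 𝒜 U.dm)))
          U.mu).comp (midIns 𝒜 U.cop (U.dl - U.dm))) ∧
    -- (μ⊗μ)(1⊗c⊗1) = (-1)^{|λ||μ|}λμ
    ((TensorProduct.map
        (U.mu.comp (TensorProduct.map (signAction 𝒜 U.dm) (signAction 𝒜 U.dm)))
        U.mu).comp (midIns 𝒜 U.cop (U.dl - U.dm))
      = ksign (U.dl * U.dm) • (U.lam.comp U.mu)) := by
  refine ⟨?_, U.rTensor_lam_cop, ?_, ?_, ?_⟩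
  · rw [U.cofrob_left, rTensor_comp, rTensor_comp]
    simp [assoc_symm_tmul_eq_rTensor]
  · refine TensorProduct.ext' fun x y => ?_
    simp only [comp_apply, LinearEquiv.coe_coe, rTensor_tmul, map_tmul]
    rw [U.map_assoc_lam_tmul, U.rTensor_assoc_symm_lam_tmul]
  · refine TensorProduct.ext' fun x y => ?_
    simp only [comp_apply, LinearEquiv.coe_coe, map_tmul]
    rw [U.rTensor_assoc_symm_lam_tmul, U.map_midIns_tmul]
  · refine TensorProduct.ext' fun x y => ?_
    rw [comp_apply, U.map_midIns_tmul, LinearMap.smul_apply, comp_apply, U.lam_mu_tmul]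

/-- In a unital coFrobenius bialgebra `(A,μ,λ,η)` with copairing
`c = (-1)^{|λ||μ|+|μ|}λη` one has
`(1⊗μ⊗1)(c⊗c) = (λ⊗1)c = (-1)^{|λ|}(1⊗λ)c` and
`(1⊗μ)(λ⊗1) = (μ⊗1)(1⊗λ) = (μ⊗μ)(1⊗c⊗1) = (-1)^{|λ||μ|}λμ`. -/
theorem unital_coFrobenius_identities {R : Type} [CommRing R] {M : Type} [AddCommGroup M]
    [Module R M] [Module.Free R M] [Module.Finite R M]
    (𝒜 : ℤ → Submodule R M) [DirectSum.Decomposition 𝒜]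
    (U : UnitalCoFrob R 𝒜) :
    -- (1⊗μ⊗1)(c⊗c) = (λ⊗1)c
    (((LinearMap.rTensor M (TensorProduct.map (signAction 𝒜 U.dm) U.mu)).comp
        ((LinearMap.rTensor M (TensorProduct.assoc R M M M).toLinearMap).comp
          (TensorProduct.assoc R (M ⊗[R] M) M M).symm.toLinearMap))
        (U.cop ⊗ₜ[R] U.cop)
      = LinearMap.rTensor M U.lam U.cop) ∧
    -- (λ⊗1)c = (-1)^{|λ|}(1⊗λ)c
    (LinearMap.rTensor M U.lam U.cop =
      ksign U.dl • ((TensorProduct.assoc R M M M).symm.toLinearMap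
        ((TensorProduct.map (signAction 𝒜 U.dl) U.lam) U.cop))) ∧
    -- (1⊗μ)(λ⊗1) = (μ⊗1)(1⊗λ)
    ((TensorProduct.map (signAction 𝒜 U.dm) U.mu).comp
        ((TensorProduct.assoc R M M M).toLinearMap.comp (LinearMap.rTensor M U.lam))
      = (LinearMap.rTensor M U.mu).comp
        ((TensorProduct.assoc R M M M).symm.toLinearMap.comp
          (TensorProduct.map (signAction 𝒜 U.dl) U.lam))) ∧
    -- (μ⊗1)(1⊗λ) = (μ⊗μ)(1⊗c⊗1)
    ((LinearMap.rTensor M U.mu).comp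
        ((TensorProduct.assoc R M M M).symm.toLinearMap.comp
          (TensorProduct.map (signAction 𝒜 U.dl) U.lam))
      = (TensorProduct.map
          (U.mu.comp (TensorProduct.map (signAction 𝒜 U.dm) (signAction 𝒜 U.dm)))
          U.mu).comp (midIns 𝒜 U.cop (U.dl - U.dm))) ∧
    -- (μ⊗μ)(1⊗c⊗1) = (-1)^{|λ||μ|}λμ
    ((TensorProduct.map
        (U.mu.comp (TensorProduct.map (signAction 𝒜 U.dm) (signAction 𝒜 U.dm)))
        U.mu).comp (midIns 𝒜 U.cop (U.dl - U.dm))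
      = ksign (U.dl * U.dm) • (U.lam.comp U.mu)) :=
  unital_coFrobenius_identities_general 𝒜 U

end GradedCoFrob
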